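/- arXiv:1502.03971 — 3 statements merged into one kernel-verified Lean document; each statement's English description precedes it below -/
import Mathlib

section
/- Fix reals α > 2 and C > 0, let n ≥ 1 be an integer, and let k' be any positive integer upper bound on the maximum degree of an n-vertex α-proper power-law graph G (with constant C), e.g. k' = ⌈(C/(α−1) + 2)·n^(1/α) + i₁(n) + 3⌉. Then the number of edges of G is at most 1 + k'(k'+1)/4 + C·n·ζ(α−1), where ζ denotes the Riemann zeta function. -/
/-- The degree of a vertex `v` in a simple graph on `Fin n`. -/
noncomputable def deg {n : ℕ} (G : SimpleGraph (Fin n)) (v : Fin n) : ℕ :=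
  (G.neighborSet v).ncard

/-- The number of vertices of `G` of degree exactly `k`. -/
noncomputable def Vcard {n : ℕ} (G : SimpleGraph (Fin n)) (k : ℕ) : ℕ :=
  {v : Fin n | deg G v = k}.ncard

/-- `i₁(n)`: the smallest positive integer `i` with `⌊C·n / i^α⌋ ≤ 1`. -/
noncomputable def i1 (α C : ℝ) (n : ℕ) : ℕ :=
  sInf {i : ℕ | 0 < i ∧ ⌊C * (n : ℝ) / (i : ℝ) ^ α⌋ ≤ 1}

/-- `G` is an `α`-proper power-law graph with constant `C`. -/
def IsProperPowerLaw (α C : ℝ) {n : ℕ} (G : SimpleGraph (Fin n)) : Prop :=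
  (⌊C * (n : ℝ)⌋ - (i1 α C n : ℤ) - 1 ≤ (Vcard G 1 : ℤ) ∧ (Vcard G 1 : ℤ) ≤ ⌈C * (n : ℝ)⌉) ∧
  (⌊C * (n : ℝ) / (2 : ℝ) ^ α⌋ ≤ (Vcard G 2 : ℤ) ∧
    (Vcard G 2 : ℤ) ≤ ⌈C * (n : ℝ) / (2 : ℝ) ^ α⌉ + 1) ∧
  (∀ i : ℕ, 3 ≤ i → i ≤ n →
    (Vcard G i : ℤ) = ⌊C * (n : ℝ) / (i : ℝ) ^ α⌋ ∨
    (Vcard G i : ℤ) = ⌈C * (n : ℝ) / (i : ℝ) ^ α⌉) ∧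
  (∀ i : ℕ, 2 ≤ i → i ≤ n - 1 → Vcard G (i + 1) ≤ Vcard G i)

/-- The Riemann zeta function on reals: `ζ(s) = ∑_{k ≥ 1} k^(−s)`. -/
noncomputable def zetaR (s : ℝ) : ℝ := ∑' k : ℕ, ((k : ℝ) + 1) ^ (-s)

/-!
Count edges by degrees: `2|E| = ∑_{k ≤ k'} k·|V_k|`. The power-law conditions give
`|V_k| < C n / k^α + 1` (one more vertex is allowed in degree `2`), and `V_k = ∅` for `k ≥ n`.
So `k·|V_k| ≤ C n k^{1-α} + k` up to that extra `2`, and summing over `1 ≤ k ≤ k'` gives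
`2|E| ≤ C n ζ(α - 1) + k'(k'+1)/2 + 2`.
-/

open Finset

section Degrees

variable {n : ℕ} (G : SimpleGraph (Fin n))

lemma deg_eq_degree [DecidableRel G.Adj] (v : Fin n) : deg G v = G.degree v := by
  rw [deg, Set.ncard_eq_toFinset_card', SimpleGraph.degree, SimpleGraph.neighborFinset]

lemma deg_lt (v : Fin n) : deg G v < n := by
  classical
  simpa [deg_eq_degree] using G.degree_lt_card_verts v

lemma Vcard_eq_zero_of_le {k : ℕ} (hk : n ≤ k) : Vcard G k = 0 := by
  rw [Vcard, Set.ncard_eq_zero]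
  ext v
  simpa using ((deg_lt G v).trans_le hk).ne

lemma sum_mul_Vcard_eq_two_mul_ncard_edgeSet {K : ℕ} (hmax : ∀ v, deg G v ≤ K) :
    ∑ k ∈ range (K + 1), k * Vcard G k = 2 * G.edgeSet.ncard := by
  classical
  have hVcard : ∀ k, Vcard G k = #{v | deg G v = k} := fun k => by
    rw [Vcard, ← Set.ncard_coe_finset, coe_filter]
    simp only [mem_univ, true_and]
  rw [← SimpleGraph.coe_edgeFinset, Set.ncard_coe_finset,
    ← G.sum_degrees_eq_twice_card_edges, ← sum_fiberwise_of_maps_to (t := range (K + 1))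
      (g := deg G) (fun v _ => mem_range.mpr (Nat.lt_succ_of_le (hmax v)))]
  refine sum_congr rfl fun k _ => ?_
  rw [hVcard, sum_congr rfl fun v hv => by rw [← deg_eq_degree, (mem_filter.mp hv).2],
    sum_const, smul_eq_mul, mul_comm]

end Degrees

lemma summable_nat_add_one_rpow_neg {s : ℝ} (hs : 1 < s) :
    Summable fun k : ℕ => ((k : ℝ) + 1) ^ (-s) := by
  refine ((summable_nat_add_iff 1).mpr (Real.summable_one_div_nat_rpow.mpr hs)).congr fun k => ?_
  push_cast
  rw [Real.rpow_neg (by positivity), one_div]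

lemma zetaR_nonneg (s : ℝ) : 0 ≤ zetaR s :=
  tsum_nonneg fun _ => Real.rpow_nonneg (by positivity) _

lemma sum_range_le_zetaR {s : ℝ} (hs : 1 < s) (m : ℕ) :
    ∑ k ∈ range m, ((k : ℝ) + 1) ^ (-s) ≤ zetaR s :=
  (summable_nat_add_one_rpow_neg hs).sum_le_tsum _ fun _ _ => Real.rpow_nonneg (by positivity) _

lemma sum_range_cast_add_one (m : ℕ) : ∑ k ∈ range m, ((k : ℝ) + 1) = m * (m + 1) / 2 := by
  induction m with
  | zero => simp
  | succ m ih => rw [sum_range_succ, ih]; push_cast; ring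

namespace IsProperPowerLaw

variable {α C : ℝ} {n : ℕ} {G : SimpleGraph (Fin n)}

lemma Vcard_le (hG : IsProperPowerLaw α C G) (hC : 0 ≤ C) {k : ℕ} (hk : 1 ≤ k) :
    (Vcard G k : ℝ) ≤ C * n / (k : ℝ) ^ α + 1 + if k = 2 then 1 else 0 := by
  obtain ⟨⟨-, hV₁⟩, ⟨-, hV₂⟩, hV, -⟩ := hG
  obtain rfl | rfl | hk3 : k = 1 ∨ k = 2 ∨ 3 ≤ k := by omega
  · have := Int.ceil_lt_add_one (C * n)
    have : (Vcard G 1 : ℝ) ≤ ⌈C * n⌉ := by exact_mod_cast hV₁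
    norm_num
    linarith
  · have := Int.ceil_lt_add_one (C * n / (2 : ℝ) ^ α)
    have : (Vcard G 2 : ℝ) ≤ ⌈C * n / (2 : ℝ) ^ α⌉ + 1 := by exact_mod_cast hV₂
    simp only [Nat.cast_ofNat, ↓reduceIte]
    linarith
  rw [if_neg (by omega), add_zero]
  by_cases hkn : k ≤ n
  · have hceil : (Vcard G k : ℝ) ≤ ⌈C * n / (k : ℝ) ^ α⌉ := by
      rcases hV k hk3 hkn with h | h
      · exact_mod_cast h.le.trans (Int.floor_le_ceil _)
      · exact_mod_cast h.le
    linarith [Int.ceil_lt_add_one (C * n / (k : ℝ) ^ α)]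
  · rw [Vcard_eq_zero_of_le G (by omega), Nat.cast_zero]
    positivity

lemma mul_Vcard_succ_le (hG : IsProperPowerLaw α C G) (hC : 0 ≤ C) (k : ℕ) :
    ((k : ℝ) + 1) * Vcard G (k + 1) ≤
      C * n * ((k : ℝ) + 1) ^ (-(α - 1)) + ((k : ℝ) + 1) + if k = 1 then 2 else 0 := by
  have hk : (0 : ℝ) < k + 1 := by positivity
  have hpow : ((k : ℝ) + 1) ^ (-(α - 1)) = ((k : ℝ) + 1) / ((k : ℝ) + 1) ^ α := by
    rw [neg_sub, Real.rpow_sub hk, Real.rpow_one]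
  have := mul_le_mul_of_nonneg_left (hG.Vcard_le hC (Nat.le_add_left 1 k)) hk.le
  push_cast at this
  refine this.trans_eq ?_
  rw [hpow]
  obtain rfl | hk1 := eq_or_ne k 1
  · norm_num
    ring
  · simp only [if_neg hk1]
    ring

lemma two_mul_ncard_edgeSet_le (hG : IsProperPowerLaw α C G) (hα : 2 < α) (hC : 0 ≤ C)
    {K : ℕ} (hmax : ∀ v, deg G v ≤ K) :
    2 * (G.edgeSet.ncard : ℝ) ≤ C * n * zetaR (α - 1) + K * (K + 1) / 2 + 2 := by
  have hhandshake := congrArg (Nat.cast : ℕ → ℝ) (sum_mul_Vcard_eq_two_mul_ncard_edgeSet G hmax)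
  rw [sum_range_succ'] at hhandshake
  push_cast at hhandshake
  have hextra : ∑ k ∈ range K, (if k = 1 then (2 : ℝ) else 0) ≤ 2 := by
    rw [sum_ite_eq']
    split_ifs <;> norm_num
  have hzeta := mul_le_mul_of_nonneg_left (sum_range_le_zetaR (by linarith : 1 < α - 1) K)
    (by positivity : 0 ≤ C * n)
  calc 2 * (G.edgeSet.ncard : ℝ) = ∑ k ∈ range K, ((k : ℝ) + 1) * Vcard G (k + 1) := by
        linarith
    _ ≤ ∑ k ∈ range K, (C * n * ((k : ℝ) + 1) ^ (-(α - 1)) + ((k : ℝ) + 1) +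
          if k = 1 then 2 else 0) := sum_le_sum fun k _ => hG.mul_Vcard_succ_le hC k
    _ ≤ C * n * zetaR (α - 1) + K * (K + 1) / 2 + 2 := by
        rw [sum_add_distrib, sum_add_distrib, ← mul_sum, sum_range_cast_add_one]
        linarith

end IsProperPowerLaw

theorem stmt2_general (α C : ℝ) (hα : 2 < α) (hC : 0 < C) (n : ℕ)
    (G : SimpleGraph (Fin n)) (hG : IsProperPowerLaw α C G)
    (k' : ℕ) (hmax : ∀ v : Fin n, deg G v ≤ k') :
    (G.edgeSet.ncard : ℝ) ≤
      1 + (k' : ℝ) * ((k' : ℝ) + 1) / 4 + C * (n : ℝ) * zetaR (α - 1) := by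
  have hedges := hG.two_mul_ncard_edgeSet_le hα hC.le hmax
  have : 0 ≤ C * n * zetaR (α - 1) := by have := zetaR_nonneg (α - 1); positivity
  linarith

theorem stmt2 (α C : ℝ) (hα : 2 < α) (hC : 0 < C) (n : ℕ) (hn : 1 ≤ n)
    (G : SimpleGraph (Fin n)) (hG : IsProperPowerLaw α C G)
    (k' : ℕ) (hk' : 0 < k') (hmax : ∀ v : Fin n, deg G v ≤ k') :
    (G.edgeSet.ncard : ℝ) ≤
      1 + (k' : ℝ) * ((k' : ℝ) + 1) / 4 + C * (n : ℝ) * zetaR (α - 1) :=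
  stmt2_general α C hα hC n G hG k' hmax
end

section
/- For every real c > 0 and every integer n ≥ 2, the family of all n-vertex c-sparse simple graphs admits an adjacency labeling scheme with label size at most √(2·c·n·log₂ n) + 2·log₂ n + 1 bits. -/
/-- The family `F` of simple graphs on `Fin n` admits an adjacency labeling scheme
with label size at most `s` bits. -/
def HasLabelingScheme (n : ℕ) (F : SimpleGraph (Fin n) → Prop) (s : ℝ) : Prop :=
  ∃ D : List Bool → List Bool → Bool,
    ∀ G : SimpleGraph (Fin n), F G →
      ∃ ℓ : Fin n → List Bool,
        (∀ v : Fin n, ((ℓ v).length : ℝ) ≤ s) ∧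
        ∀ u v : Fin n, u ≠ v → (D (ℓ u) (ℓ v) = true ↔ G.Adj u v)

/-!
Split the vertices at a degree threshold `e ≈ √(2cn / log₂ n)`. A vertex of degree `< e` stores
its own index followed by its neighbours as `e` base-`n` digits, packed into
`⌈e log₂ n⌉ ≤ t + log₂ n` bits, where `t = √(2cn log₂ n)`. Since the degrees sum to at most `2cn`,
fewer than `t` vertices have degree `≥ e` (the high vertices); listing them, the `r`-th stores
its `⌈log₂ n⌉`-bit index followed by its adjacency bits to the `r` earlier ones. For two high
vertices the decoder reads the bit of the longer label at the position given by the length of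
the shorter one.
-/

open Finset

def fixedDigits (b : ℕ) : ℕ → ℕ → List ℕ
  | 0, _ => []
  | w + 1, N => N % b :: fixedDigits b w (N / b)

@[simp] lemma length_fixedDigits (b w N : ℕ) : (fixedDigits b w N).length = w := by
  induction w generalizing N <;> simp [fixedDigits, *]

lemma ofDigits_fixedDigits {b w N : ℕ} (h : N < b ^ w) :
    Nat.ofDigits b (fixedDigits b w N) = N := by
  induction w generalizing N with
  | zero => simp_all [fixedDigits]
  | succ w ih =>
    rw [fixedDigits, Nat.ofDigits_cons, ih (Nat.div_lt_of_lt_mul (by rwa [← pow_succ'])),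
      Nat.mod_add_div]

lemma fixedDigits_ofDigits {b : ℕ} {ds : List ℕ} (h : ∀ d ∈ ds, d < b) :
    fixedDigits b ds.length (Nat.ofDigits b ds) = ds := by
  induction ds with
  | nil => rfl
  | cons d ds ih =>
    have hd : d < b := h d List.mem_cons_self
    rw [List.length_cons, fixedDigits, Nat.ofDigits_cons, Nat.add_mul_mod_self_left,
      Nat.mod_eq_of_lt hd, Nat.add_mul_div_left _ _ (by omega), Nat.div_eq_of_lt hd, zero_add,
      ih fun x hx => h x (List.mem_cons_of_mem d hx)]

lemma lt_of_mem_fixedDigits {b w N d : ℕ} (hb : 0 < b) (h : d ∈ fixedDigits b w N) :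
    d < b := by
  induction w generalizing N with
  | zero => simp [fixedDigits] at h
  | succ w ih =>
    rcases List.mem_cons.mp h with rfl | h
    · exact Nat.mod_lt _ hb
    · exact ih h

def bitsOfNat (w N : ℕ) : List Bool := (fixedDigits 2 w N).map (· == 1)

def natOfBits (l : List Bool) : ℕ := Nat.ofDigits 2 (l.map Bool.toNat)

@[simp] lemma length_bitsOfNat (w N : ℕ) : (bitsOfNat w N).length = w := by
  simp [bitsOfNat]

lemma natOfBits_bitsOfNat {w N : ℕ} (h : N < 2 ^ w) : natOfBits (bitsOfNat w N) = N := by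
  rw [natOfBits, bitsOfNat, List.map_map, List.map_congr_left (g := id), List.map_id,
    ofDigits_fixedDigits h]
  intro d hd
  have := lt_of_mem_fixedDigits two_pos hd
  interval_cases d <;> rfl

lemma card_filter_le_degree_mul_le {V : Type*} [Fintype V] (G : SimpleGraph V)
    [DecidableRel G.Adj] (e : ℕ) : #{v | e ≤ G.degree v} * e ≤ 2 * #G.edgeFinset :=
  calc #{v | e ≤ G.degree v} * e = #{v | e ≤ G.degree v} • e := (smul_eq_mul _ _).symm
    _ ≤ ∑ v ∈ {v | e ≤ G.degree v}, G.degree v :=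
      Finset.card_nsmul_le_sum _ _ _ fun _ hv => (Finset.mem_filter.mp hv).2
    _ ≤ ∑ v, G.degree v := Finset.sum_le_sum_of_subset (Finset.subset_univ _)
    _ = 2 * #G.edgeFinset := G.sum_degrees_eq_twice_card_edges

lemma pow_le_two_pow_of_mul_logb_le {x m w : ℕ} (hx : 0 < x) (h : m * Real.logb 2 x ≤ w) :
    x ^ m ≤ 2 ^ w := by
  have hpos : (0 : ℝ) < (x : ℝ) ^ m := by positivity
  rw [← Real.logb_pow, Real.logb_le_iff_le_rpow one_lt_two hpos, Real.rpow_natCast] at h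
  exact_mod_cast h

namespace SparseLabeling

def vertexId (n k e : ℕ) : List Bool → ℕ
  | true :: l => natOfBits (l.take k)
  | false :: l => (fixedDigits n e (natOfBits l)).headD 0
  | [] => 0

/-- In a high label the adjacency bit towards the high vertex of rank `r` sits at position
`k + r + 1`, which is the length of that vertex's label. -/
def sees (n k e : ℕ) : List Bool → List Bool → Bool
  | false :: l, b => decide (vertexId n k e b ∈ fixedDigits n e (natOfBits l))
  | true :: l, true :: m => (true :: l).getD (m.length + 1) false
  | _, _ => false

def decode (n k e : ℕ) (a b : List Bool) : Bool := sees n k e a b || sees n k e b a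

variable {n : ℕ} (G : SimpleGraph (Fin n)) [DecidableRel G.Adj] (high : List (Fin n)) (k e w : ℕ)

/-- Padding with `v` itself brings the list to exactly `e` digits without adding a neighbour. -/
noncomputable def lowDigits (v : Fin n) : List ℕ :=
  (v.val :: (G.neighborFinset v).toList.map Fin.val).rightpad e v.val

noncomputable def label (v : Fin n) : List Bool :=
  if v ∈ high then
    true :: (bitsOfNat k v ++ (high.take (high.idxOf v)).map fun x => decide (G.Adj v x))
  else false :: bitsOfNat w (Nat.ofDigits n (lowDigits G e v))

variable {G high k e w}

lemma length_label_of_mem {v : Fin n} (hv : v ∈ high) :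
    (label G high k e w v).length = k + high.idxOf v + 1 := by
  simp only [label, hv, if_true, List.length_cons, List.length_append, length_bitsOfNat,
    List.length_map, List.length_take, min_eq_left (List.idxOf_lt_length_of_mem hv).le]

lemma length_label_of_not_mem {v : Fin n} (hv : v ∉ high) :
    (label G high k e w v).length = w + 1 := by
  simp [label, hv]

lemma mem_lowDigits_iff {v : Fin n} {x : ℕ} :
    x ∈ lowDigits G e v ↔ x = v ∨ ∃ u, G.Adj v u ∧ u.val = x := by
  simp only [lowDigits, List.rightpad, List.mem_append, List.mem_cons, List.mem_map,
    Finset.mem_toList, SimpleGraph.mem_neighborFinset, List.mem_replicate]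
  exact or_iff_left_of_imp fun h => .inl h.2

lemma length_lowDigits {v : Fin n} (hv : G.degree v < e) : (lowDigits G e v).length = e := by
  simp only [lowDigits, List.rightpad, List.length_cons, List.length_map, length_toList,
    SimpleGraph.card_neighborFinset_eq_degree, List.length_append, List.length_replicate]
  omega

lemma lt_of_mem_lowDigits {v : Fin n} {x : ℕ} (hx : x ∈ lowDigits G e v) : x < n := by
  rcases mem_lowDigits_iff.mp hx with rfl | ⟨u, -, rfl⟩ <;> exact Fin.isLt _

lemma fixedDigits_label_of_not_mem (hn : 1 < n) (hw : n ^ e ≤ 2 ^ w) {v : Fin n} (hv : v ∉ high)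
    (hdeg : G.degree v < e) :
    fixedDigits n e (natOfBits ((label G high k e w v).tail)) = lowDigits G e v := by
  have hlt : Nat.ofDigits n (lowDigits G e v) < 2 ^ w := by
    calc _ < n ^ (lowDigits G e v).length :=
          Nat.ofDigits_lt_base_pow_length hn fun _ => lt_of_mem_lowDigits
      _ ≤ 2 ^ w := by rwa [length_lowDigits hdeg]
  simp only [label, hv, if_false, List.tail_cons]
  have := fixedDigits_ofDigits fun _ => lt_of_mem_lowDigits (G := G) (e := e) (v := v)
  rwa [length_lowDigits hdeg, ← natOfBits_bitsOfNat hlt] at this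

lemma vertexId_label (hn : 1 < n) (hk : n ≤ 2 ^ k) (hw : n ^ e ≤ 2 ^ w)
    (hlow : ∀ v ∉ high, G.degree v < e) (v : Fin n) :
    vertexId n k e (label G high k e w v) = v := by
  by_cases hv : v ∈ high
  · simp only [label, hv, if_true, vertexId, List.take_left' (length_bitsOfNat k v)]
    exact natOfBits_bitsOfNat (v.isLt.trans_le hk)
  · have hdigits := fixedDigits_label_of_not_mem (k := k) hn hw hv (hlow v hv)
    simp only [label, hv, if_false, List.tail_cons] at hdigits ⊢
    rw [vertexId, hdigits]
    simp [lowDigits, List.rightpad]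

lemma sees_label_of_not_mem (hn : 1 < n) (hk : n ≤ 2 ^ k) (hw : n ^ e ≤ 2 ^ w)
    (hlow : ∀ v ∉ high, G.degree v < e) {u v : Fin n} (hu : u ∉ high) (huv : u ≠ v) :
    sees n k e (label G high k e w u) (label G high k e w v) = true ↔ G.Adj u v := by
  have hdigits := fixedDigits_label_of_not_mem (k := k) hn hw hu (hlow u hu)
  have hlabel : label G high k e w u = false :: (label G high k e w u).tail := by simp [label, hu]
  rw [hlabel, sees, hdigits, vertexId_label hn hk hw hlow, decide_eq_true_iff, mem_lowDigits_iff]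
  simp [Fin.val_inj, huv.symm]

lemma sees_label_of_mem_of_not_mem {u v : Fin n} (hu : u ∈ high) (hv : v ∉ high) :
    sees n k e (label G high k e w u) (label G high k e w v) = false := by
  simp [label, hu, hv, sees]

lemma sees_label_of_mem {u v : Fin n} (hu : u ∈ high) (hv : v ∈ high) :
    sees n k e (label G high k e w u) (label G high k e w v) = true ↔
      high.idxOf v < high.idxOf u ∧ G.Adj u v := by
  have hlen := List.idxOf_lt_length_of_mem hv
  simp only [label, hu, hv, if_true, sees, length_bitsOfNat, List.length_append, List.length_map,
    List.length_take, min_eq_left hlen.le, List.getD_cons_succ]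
  rw [List.getD_append_right _ _ _ _ (by simp), length_bitsOfNat, Nat.add_sub_cancel_left,
    List.getD_eq_getElem?_getD, List.getElem?_map, List.getElem?_take]
  by_cases hlt : high.idxOf v < high.idxOf u
  · simp [hlt, List.getElem?_eq_getElem hlen, List.getElem_idxOf]
  · simp [hlt]

lemma decode_label_iff (hn : 1 < n) (hk : n ≤ 2 ^ k) (hw : n ^ e ≤ 2 ^ w)
    (hlow : ∀ v ∉ high, G.degree v < e) {u v : Fin n} (huv : u ≠ v) :
    decode n k e (label G high k e w u) (label G high k e w v) = true ↔ G.Adj u v := by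
  rw [decode, Bool.or_eq_true]
  by_cases hu : u ∈ high <;> by_cases hv : v ∈ high
  · have hidx : high.idxOf u ≠ high.idxOf v := fun h => huv ((List.idxOf_inj hu).mp h)
    rw [sees_label_of_mem hu hv, sees_label_of_mem hv hu, G.adj_comm v u]
    rcases hidx.lt_or_gt with h | h <;> simp [h, h.not_gt]
  · rw [sees_label_of_mem_of_not_mem hu hv, sees_label_of_not_mem hn hk hw hlow hv huv.symm,
      G.adj_comm]
    simp
  · rw [sees_label_of_not_mem hn hk hw hlow hu huv, sees_label_of_mem_of_not_mem hv hu]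
    simp
  · rw [sees_label_of_not_mem hn hk hw hlow hu huv,
      sees_label_of_not_mem hn hk hw hlow hv huv.symm, G.adj_comm v u, or_self]

lemma exists_params {c : ℝ} (hc : 0 < c) {n : ℕ} (hn : 2 ≤ n) :
    ∃ k e w : ℕ, n ≤ 2 ^ k ∧ n ^ e ≤ 2 ^ w ∧
      (w + 1 : ℝ) ≤ √(2 * c * n * Real.logb 2 n) + 2 * Real.logb 2 n + 1 ∧
      ∀ h : ℕ, (h * e : ℝ) ≤ 2 * c * n →
        (k + h : ℝ) ≤ √(2 * c * n * Real.logb 2 n) + 2 * Real.logb 2 n + 1 := by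
  set L := Real.logb 2 n
  set t := √(2 * c * n * L)
  have hL : 1 ≤ L := by
    rw [← Real.logb_self_eq_one one_lt_two]
    exact Real.logb_le_logb_of_le one_lt_two two_pos (by exact_mod_cast hn)
  have ht : 0 < t := Real.sqrt_pos.mpr (by positivity)
  have htt : t * t = 2 * c * n * L := Real.mul_self_sqrt (by positivity)
  set e := ⌊t / L⌋₊ + 1
  have he_gt : t < e * L := by
    have := Nat.lt_floor_add_one (t / L)
    rw [div_lt_iff₀ (by linarith)] at this
    push_cast [e]
    linarith
  have he_le : e * L ≤ t + L := by
    have := Nat.floor_le (div_nonneg ht.le (by linarith : (0 : ℝ) ≤ L))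
    rw [le_div_iff₀ (by linarith)] at this
    push_cast [e]
    linarith
  refine ⟨⌈L⌉₊, e, ⌈e * L⌉₊, pow_one n ▸ pow_le_two_pow_of_mul_logb_le (by omega) ?_,
    pow_le_two_pow_of_mul_logb_le (by omega) (Nat.le_ceil _), ?_, fun h hh => ?_⟩
  · simpa using Nat.le_ceil L
  · have := Nat.ceil_lt_add_one (by positivity : 0 ≤ e * L)
    linarith
  · have hht : (h : ℝ) < t := by
      refine lt_of_mul_lt_mul_right (a := e * L) ?_ (by positivity)
      calc (h : ℝ) * (e * L) = h * e * L := by ring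
        _ ≤ 2 * c * n * L := by gcongr
        _ = t * t := htt.symm
        _ < t * (e * L) := by gcongr
    have := Nat.ceil_lt_add_one (by positivity : 0 ≤ L)
    linarith

end SparseLabeling

theorem stmt4 (c : ℝ) (hc : 0 < c) (n : ℕ) (hn : 2 ≤ n) :
    HasLabelingScheme n (fun G => (G.edgeSet.ncard : ℝ) ≤ c * (n : ℝ))
      (Real.sqrt (2 * c * (n : ℝ) * Real.logb 2 (n : ℝ)) + 2 * Real.logb 2 (n : ℝ) + 1) := by
  classical
  obtain ⟨k, e, w, hk, hw, hlow_length, hhigh_length⟩ := SparseLabeling.exists_params hc hn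
  refine ⟨SparseLabeling.decode n k e, fun G hG => ?_⟩
  set high := ({v | e ≤ G.degree v} : Finset (Fin n)).toList
  have hlow : ∀ v ∉ high, G.degree v < e := by simp [high]
  refine ⟨SparseLabeling.label G high k e w, fun v => ?_,
    fun u v huv => SparseLabeling.decode_label_iff (by omega) hk hw hlow huv⟩
  by_cases hv : v ∈ high
  · have hedges : (#G.edgeFinset : ℝ) ≤ c * n := by
      rwa [← Set.ncard_coe_finset, G.coe_edgeFinset]
    have hcount : (high.length * e : ℝ) ≤ 2 * c * n := by
      have := (Nat.cast_le (α := ℝ)).mpr (card_filter_le_degree_mul_le G e)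
      push_cast at this
      rw [Finset.length_toList]
      linarith
    have := List.idxOf_lt_length_of_mem hv
    rw [SparseLabeling.length_label_of_mem hv]
    refine le_trans ?_ (hhigh_length _ hcount)
    exact_mod_cast (by omega : k + high.idxOf v + 1 ≤ k + high.length)
  · rw [SparseLabeling.length_label_of_not_mem hv]
    exact_mod_cast hlow_length
end

section
/- Fix reals α > 2 and C with 0 < C ≤ 1/ζ(α), where ζ is the Riemann zeta function, and let C' be any real with C' ≥ (C/(α−1) + (C/2)^(1/α) + 6)^α + C/(α−1). Then there exists a constant d > 0 such that for all sufficiently large integers n, any adjacency labeling scheme for the family of all n-vertex simple graphs in P_α(C') must assign, to some vertex of some graph in the family, a label of length at least d·n^(1/α) bits. -/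
/-- `G` belongs to the family `P_α(C')`. -/
def InPalpha (α C' : ℝ) {n : ℕ} (G : SimpleGraph (Fin n)) : Prop :=
  ∀ k : ℕ, ((n : ℝ) / Real.logb 2 (n : ℝ)) ^ (1 / α) ≤ (k : ℝ) → k ≤ n - 1 →
    ({v : Fin n | k ≤ deg G v}.ncard : ℝ) ≤ C' * (n : ℝ) / (k : ℝ) ^ (α - 1)

section Aux

/-- Encode a list of booleans as a natural number (1-prefixed binary). -/
def lval : List Bool → ℕ
  | [] => 1
  | b :: l => 2 * lval l + cond b 1 0

lemma lval_pos (l : List Bool) : 0 < lval l := by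
  induction l with
  | nil => simp [lval]
  | cons b l ih => simp only [lval]; omega

lemma lval_lt (l : List Bool) : lval l < 2 ^ (l.length + 1) := by
  induction l with
  | nil => simp [lval]
  | cons b l ih =>
    have : cond b 1 0 ≤ 1 := by cases b <;> simp
    simp only [lval, List.length_cons, pow_succ]
    omega

lemma lval_inj : Function.Injective lval := by
  intro l₁
  induction l₁ with
  | nil =>
    intro l₂ h
    cases l₂ with
    | nil => rfl
    | cons b l =>
      exfalso
      have h2 := lval_pos l
      cases b <;> simp [lval] at h <;> omega
  | cons b l ih =>
    intro l₂ h
    cases l₂ with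
    | nil =>
      exfalso
      have h2 := lval_pos l
      cases b <;> simp [lval] at h <;> omega
    | cons b' l' =>
      simp only [lval] at h
      have hb : cond b 1 0 = cond b' 1 0 := by
        cases b <;> cases b' <;> simp_all <;> omega
      have hl : lval l = lval l' := by omega
      have := ih hl
      subst this
      cases b <;> cases b' <;> simp_all

lemma half_pow_le_factorial (h : ℕ) : (h / 2) ^ (h / 2) ≤ Nat.factorial h := by
  rcases Nat.eq_zero_or_pos (h / 2) with h0 | h0
  · simp [h0, Nat.one_le_iff_ne_zero, Nat.factorial_ne_zero]
  calc (h / 2) ^ (h / 2) ≤ (h / 2) ^ (h - h / 2) :=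
        Nat.pow_le_pow_right h0 (by omega)
    _ ≤ Nat.factorial (h / 2) * (h / 2) ^ (h - h / 2) :=
        Nat.le_mul_of_pos_left _ (Nat.factorial_pos _)
    _ ≤ Nat.factorial h := Nat.factorial_mul_pow_sub_le_factorial (by omega)

section Construction

variable {n s h : ℕ}

lemma decode_unique {a b c d h : ℕ} (hc : c < h) (hd : d < h)
    (e : a * h + c = b * h + d) : a = b ∧ c = d := by
  have h0 : 0 < h := Nat.pos_of_ne_zero (by omega)
  have ha : (a * h + c) / h = a := by
    rw [mul_comm, Nat.mul_add_div h0, Nat.div_eq_of_lt hc, add_zero]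
  have hb : (b * h + d) / h = b := by
    rw [mul_comm, Nat.mul_add_div h0, Nat.div_eq_of_lt hd, add_zero]
  have hab : a = b := by rw [← ha, ← hb, e]
  exact ⟨hab, by subst hab; omega⟩

def encA (hn : 2 * s * h ≤ n) (i : Fin s) (x : Fin h) : Fin n :=
  ⟨i.val * h + x.val, by
    have h1 : i.val * h + x.val < (i.val + 1) * h := by
      have := x.isLt; nlinarith
    have h2 : (i.val + 1) * h ≤ s * h := Nat.mul_le_mul_right h i.isLt
    have h3 : s * h ≤ 2 * s * h := by nlinarith
    omega⟩

def encB (hn : 2 * s * h ≤ n) (j : Fin s) (y : Fin h) : Fin n :=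
  ⟨s * h + (j.val * h + y.val), by
    have h1 : j.val * h + y.val < (j.val + 1) * h := by
      have := y.isLt; nlinarith
    have h2 : (j.val + 1) * h ≤ s * h := Nat.mul_le_mul_right h j.isLt
    have : 2 * s * h = s * h + s * h := by ring
    omega⟩

lemma encA_lt (hn : 2 * s * h ≤ n) (i : Fin s) (x : Fin h) :
    (encA hn i x).val < s * h := by
  have h1 : i.val * h + x.val < (i.val + 1) * h := by
    have := x.isLt; nlinarith
  have h2 : (i.val + 1) * h ≤ s * h := Nat.mul_le_mul_right h i.isLt
  simpa [encA] using lt_of_lt_of_le h1 h2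

lemma encB_ge (hn : 2 * s * h ≤ n) (j : Fin s) (y : Fin h) :
    s * h ≤ (encB hn j y).val := by simp [encB]

lemma encA_inj (hn : 2 * s * h ≤ n) {i i' : Fin s} {x x' : Fin h}
    (e : encA hn i x = encA hn i' x') : i = i' ∧ x = x' := by
  have := congrArg Fin.val e
  simp only [encA] at this
  obtain ⟨h1, h2⟩ := decode_unique x.isLt x'.isLt this
  exact ⟨Fin.ext h1, Fin.ext h2⟩

lemma encB_inj (hn : 2 * s * h ≤ n) {j j' : Fin s} {y y' : Fin h}
    (e : encB hn j y = encB hn j' y') : j = j' ∧ y = y' := by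
  have := congrArg Fin.val e
  simp only [encB] at this
  obtain ⟨h1, h2⟩ := decode_unique y.isLt y'.isLt (Nat.add_left_cancel this)
  exact ⟨Fin.ext h1, Fin.ext h2⟩

lemma encA_ne_encB (hn : 2 * s * h ≤ n) (i j : Fin s) (x y : Fin h) :
    encA hn i x ≠ encB hn j y := by
  intro e
  have h1 := encA_lt hn i x
  have h2 := encB_ge hn j y
  rw [e] at h1
  omega

/-- The relation defining our family of graphs. -/
def GRel (hn : 2 * s * h ≤ n) (π : Fin s → Fin s → Equiv.Perm (Fin h))
    (u v : Fin n) : Prop :=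
  ∃ i j x, u = encA hn i x ∧ v = encB hn j (π i j x)

/-- The graph associated to a tuple of permutations. -/
def Gr (hn : 2 * s * h ≤ n) (π : Fin s → Fin s → Equiv.Perm (Fin h)) :
    SimpleGraph (Fin n) :=
  SimpleGraph.fromRel (GRel hn π)

lemma Gr_adj_of (hn : 2 * s * h ≤ n) (π : Fin s → Fin s → Equiv.Perm (Fin h))
    (i j : Fin s) (x : Fin h) :
    (Gr hn π).Adj (encA hn i x) (encB hn j (π i j x)) := by
  rw [Gr, SimpleGraph.fromRel_adj]
  exact ⟨encA_ne_encB hn i j x _, Or.inl ⟨i, j, x, rfl, rfl⟩⟩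

lemma Gr_injective (hn : 2 * s * h ≤ n) :
    Function.Injective (Gr (n := n) hn) := by
  intro π π' e
  funext i j
  apply Equiv.ext
  intro x
  have hadj := Gr_adj_of hn π i j x
  rw [e, Gr, SimpleGraph.fromRel_adj] at hadj
  obtain ⟨hne, hcase⟩ := hadj
  rcases hcase with ⟨i', j', x', hu, hv⟩ | ⟨i', j', x', hu, hv⟩
  · obtain ⟨hi, hx⟩ := encA_inj hn hu
    obtain ⟨hj, hy⟩ := encB_inj hn hv
    subst hi; subst hx; subst hj
    exact hy
  · exact absurd hu.symm (encA_ne_encB hn i' j x' (π i j x))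

end Construction

section Degree

lemma ncard_range_le_card {m n : ℕ} (f : Fin m → Fin n) :
    (Set.range f).ncard ≤ m := by
  rw [← Set.image_univ]
  calc (f '' Set.univ).ncard ≤ (Set.univ : Set (Fin m)).ncard :=
        Set.ncard_image_le (Set.toFinite _)
    _ = m := by rw [Set.ncard_univ, Nat.card_eq_fintype_card, Fintype.card_fin]

lemma neighborSet_Gr_le {n s h : ℕ} (hn : 2 * s * h ≤ n)
    (π : Fin s → Fin s → Equiv.Perm (Fin h)) (v : Fin n) :
    ((Gr hn π).neighborSet v).ncard ≤ s := by
  rcases lt_or_ge v.val (s * h) with hv | hv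
  · -- v is an A-vertex
    have h0 : 0 < h := by
      rcases Nat.eq_zero_or_pos h with h0 | h0
      · subst h0; simp at hv
      · exact h0
    have hdiv : v.val / h < s := Nat.div_lt_of_lt_mul (by rw [mul_comm h s]; exact hv)
    set i : Fin s := ⟨v.val / h, hdiv⟩
    set x : Fin h := ⟨v.val % h, Nat.mod_lt _ h0⟩
    have hv_eq : v = encA hn i x := by
      apply Fin.ext
      simp only [encA, i, x]
      rw [mul_comm, Nat.div_add_mod]
    have hsub : (Gr hn π).neighborSet v ⊆
        Set.range (fun j : Fin s => encB hn j (π i j x)) := by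
      intro w hw
      rw [SimpleGraph.mem_neighborSet, Gr, SimpleGraph.fromRel_adj] at hw
      obtain ⟨hne, hcase⟩ := hw
      rcases hcase with ⟨i', j', x', hu, hw'⟩ | ⟨i', j', x', hu, hw'⟩
      · rw [hv_eq] at hu
        obtain ⟨hi, hx⟩ := encA_inj hn hu
        subst hi; subst hx
        exact ⟨j', hw'.symm⟩
      · exfalso
        have := encB_ge hn j' (π i' j' x')
        rw [← hw'] at this
        omega
    calc ((Gr hn π).neighborSet v).ncard
        ≤ (Set.range (fun j : Fin s => encB hn j (π i j x))).ncard :=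
          Set.ncard_le_ncard hsub (Set.toFinite _)
      _ ≤ s := ncard_range_le_card _
  · rcases lt_or_ge v.val (2 * s * h) with hv2 | hv2
    · -- v is a B-vertex
      have h0 : 0 < h := by
        rcases Nat.eq_zero_or_pos h with h0 | h0
        · subst h0; simp at hv2
        · exact h0
      have hdiv : (v.val - s * h) / h < s := by
        apply Nat.div_lt_of_lt_mul
        have e1 : 2 * s * h = s * h + h * s := by ring
        omega
      set j : Fin s := ⟨(v.val - s * h) / h, hdiv⟩
      set y : Fin h := ⟨(v.val - s * h) % h, Nat.mod_lt _ h0⟩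
      have hv_eq : v = encB hn j y := by
        apply Fin.ext
        simp only [encB, j, y]
        have hd := Nat.div_add_mod (v.val - s * h) h
        have e : (v.val - s * h) / h * h = h * ((v.val - s * h) / h) := mul_comm _ _
        omega
      have hsub : (Gr hn π).neighborSet v ⊆
          Set.range (fun i : Fin s => encA hn i ((π i j).symm y)) := by
        intro w hw
        rw [SimpleGraph.mem_neighborSet, Gr, SimpleGraph.fromRel_adj] at hw
        obtain ⟨hne, hcase⟩ := hw
        rcases hcase with ⟨i', j', x', hu, hw'⟩ | ⟨i', j', x', hu, hw'⟩
        · exfalso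
          have h1 : (encA hn i' x').val < s * h := encA_lt hn i' x'
          rw [hu] at hv
          exact absurd hv (not_le.mpr h1)
        · obtain ⟨hj, hy⟩ := encB_inj hn (hv_eq.symm.trans hw')
          subst hj
          refine ⟨i', ?_⟩
          show encA hn i' ((π i' j).symm y) = w
          rw [hy, Equiv.symm_apply_apply, hu]
      calc ((Gr hn π).neighborSet v).ncard
          ≤ (Set.range (fun i : Fin s => encA hn i ((π i j).symm y))).ncard :=
            Set.ncard_le_ncard hsub (Set.toFinite _)
        _ ≤ s := ncard_range_le_card _
    · -- v is isolated
      have : (Gr hn π).neighborSet v = ∅ := by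
        ext w
        simp only [SimpleGraph.mem_neighborSet, Gr, SimpleGraph.fromRel_adj,
          Set.mem_empty_iff_false, iff_false]
        rintro ⟨hne, ⟨i', j', x', hu, hw'⟩ | ⟨i', j', x', hu, hw'⟩⟩
        · have := encA_lt hn i' x'
          rw [← hu] at this
          have : s * h ≤ 2 * s * h := by nlinarith
          omega
        · have h1 := encB_ge hn j' (π i' j' x')
          have h2 := (encB hn j' (π i' j' x')).isLt
          have h3 : (encB hn j' (π i' j' x')).val < 2 * s * h := by
            simp only [encB]
            have := (π i' j' x').isLt
            have := j'.isLt
            have h4 : j'.val * h + (π i' j' x').val < (j'.val + 1) * h := by nlinarith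
            have h5 : (j'.val + 1) * h ≤ s * h := Nat.mul_le_mul_right h j'.isLt
            have : 2 * s * h = s * h + s * h := by ring
            omega
          rw [← hw'] at h3
          omega
      rw [this]
      simp

end Degree

open Filter Real

noncomputable def sfun (α : ℝ) (n : ℕ) : ℕ :=
  ⌊((n : ℝ) / (Real.logb 2 (n : ℝ)) ^ 2) ^ (1 / α)⌋₊

noncomputable def hfun (α : ℝ) (n : ℕ) : ℕ := n / (2 * sfun α n)

noncomputable def mfun (α : ℝ) (n : ℕ) : ℕ := ⌊(n : ℝ) ^ (1 / α)⌋₊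

set_option maxHeartbeats 1000000 in
lemma eventually_good (α : ℝ) (hα : 2 < α) :
    ∀ᶠ n : ℕ in Filter.atTop,
      ((sfun α n : ℝ) < ((n : ℝ) / Real.logb 2 (n : ℝ)) ^ (1 / α)) ∧
      2 ≤ hfun α n ∧
      (mfun α n + 1) * n <
        Nat.log 2 (hfun α n / 2) * (hfun α n / 2) * (sfun α n * sfun α n) := by
  have hα0 : (0:ℝ) < α := by linarith
  have hα1 : 0 < 1 / α := by positivity
  have tN : Tendsto (fun n : ℕ => (n : ℝ)) atTop atTop := tendsto_natCast_atTop_atTop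
  have tL : Tendsto (fun n : ℕ => Real.logb 2 (n : ℝ)) atTop atTop :=
    (Real.tendsto_logb_atTop one_lt_two).comp tN
  have F1 : ∀ᶠ n : ℕ in atTop, (20:ℝ) ≤ Real.logb 2 (n : ℝ) := tL.eventually_ge_atTop 20
  have F2 : ∀ᶠ n : ℕ in atTop, (512:ℝ) ≤ (Real.logb 2 (n : ℝ)) ^ (1 - 2/α) :=
    ((tendsto_rpow_atTop (by rw [sub_pos, div_lt_one hα0]; linarith)).comp
      tL).eventually_ge_atTop 512
  have F3 : ∀ᶠ n : ℕ in atTop, (2:ℝ) ≤ (n : ℝ) ^ (1/α) :=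
    ((tendsto_rpow_atTop hα1).comp tN).eventually_ge_atTop 2
  have F4 : ∀ᶠ n : ℕ in atTop, (8:ℝ) ≤ (n : ℝ) ^ ((1:ℝ)/2) :=
    ((tendsto_rpow_atTop (by norm_num)).comp tN).eventually_ge_atTop 8
  have F5 : ∀ᶠ n : ℕ in atTop, 4 * (2:ℝ) ^ α ≤ (n : ℝ) ^ ((3:ℝ)/4) :=
    ((tendsto_rpow_atTop (by norm_num)).comp tN).eventually_ge_atTop _
  have F6 : ∀ᶠ n : ℕ in atTop, Real.log (n : ℝ) ≤ (n : ℝ) ^ ((1:ℝ)/8) := by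
    have h := isLittleO_log_rpow_atTop (by norm_num : (0:ℝ) < 1/8)
    have h2 := (Asymptotics.isLittleO_iff.mp h) one_pos
    filter_upwards [tN.eventually h2] with n hn
    calc Real.log (n:ℝ) ≤ ‖Real.log (n:ℝ)‖ := le_abs_self _
      _ ≤ 1 * ‖(n:ℝ) ^ ((1:ℝ)/8)‖ := hn
      _ = (n:ℝ) ^ ((1:ℝ)/8) := by
          rw [one_mul, Real.norm_of_nonneg (Real.rpow_nonneg (by positivity) _)]
  have F7 : ∀ᶠ n : ℕ in atTop, 2 ≤ n := eventually_ge_atTop 2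
  filter_upwards [F1, F2, F3, F4, F5, F6, F7] with n hL20 hL512 hn2 hn8 hn34 hlog hn2'
  have hN2' : (2:ℝ) ≤ (n : ℝ) := by exact_mod_cast hn2'
  set N : ℝ := (n : ℝ) with hN
  have hN0 : (0:ℝ) < N := by linarith only [hN2']
  have hN1 : (1:ℝ) ≤ N := by linarith only [hN2']
  set L : ℝ := Real.logb 2 N with hLdef
  have hL0 : (0:ℝ) < L := by linarith only [hL20]
  have hlog2 : (1:ℝ)/2 < Real.log 2 := by
    have h0 := Real.log_two_gt_d9; linarith only [h0]
  have hlogN0 : 0 ≤ Real.log N := Real.log_nonneg hN1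
  have hL_le : L ≤ 2 * N ^ ((1:ℝ)/8) := by
    have h1 : L = Real.log N / Real.log 2 := rfl
    rw [h1, div_le_iff₀ (by linarith only [hlog2])]
    have hN8 : (0:ℝ) ≤ N ^ ((1:ℝ)/8) := Real.rpow_nonneg hN0.le _
    nlinarith only [hlog, hlog2, hlogN0, hN8]
  have hL2_le : L ^ 2 ≤ 4 * N ^ ((1:ℝ)/4) := by
    have h8 : (0:ℝ) ≤ N ^ ((1:ℝ)/8) := Real.rpow_nonneg hN0.le _
    have hsq : (2 * N ^ ((1:ℝ)/8)) ^ 2 = 4 * N ^ ((1:ℝ)/4) := by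
      rw [mul_pow, ← Real.rpow_natCast (N ^ ((1:ℝ)/8)) 2, ← Real.rpow_mul hN0.le]
      norm_num
    calc L ^ 2 ≤ (2 * N ^ ((1:ℝ)/8)) ^ 2 := by nlinarith only [hL0.le, hL_le, h8]
      _ = 4 * N ^ ((1:ℝ)/4) := hsq
  set x : ℝ := (N / L ^ 2) ^ (1 / α) with hxdef
  have hNL2pos : 0 < N / L ^ 2 := by positivity
  have hxpos : 0 < x := Real.rpow_pos_of_pos hNL2pos _
  -- lower bound on N / L^2
  have hNL2_lb : (2:ℝ) ^ α ≤ N / L ^ 2 := by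
    have h1 : N / (4 * N ^ ((1:ℝ)/4)) ≤ N / L ^ 2 :=
      div_le_div_of_nonneg_left hN0.le (by positivity) hL2_le
    have hq : N ^ ((3:ℝ)/4) * N ^ ((1:ℝ)/4) = N := by
      rw [← Real.rpow_add hN0]; norm_num
    have h2 : N / (4 * N ^ ((1:ℝ)/4)) = N ^ ((3:ℝ)/4) / 4 := by
      rw [div_eq_div_iff (by positivity) (by norm_num)]
      nlinarith only [hq]
    rw [h2] at h1
    linarith only [h1, hn34]
  have hx2 : (2:ℝ) ≤ x := by
    have h1 : ((2:ℝ) ^ α) ^ (1/α) ≤ x :=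
      Real.rpow_le_rpow (by positivity) hNL2_lb hα1.le
    have h2 : ((2:ℝ) ^ α) ^ (1/α) = 2 := by
      rw [← Real.rpow_mul (by norm_num : (0:ℝ) ≤ 2), mul_one_div, div_self hα0.ne',
        Real.rpow_one]
    rw [h2] at h1
    linarith only [h1]
  set sR : ℝ := (sfun α n : ℝ) with hsRdef
  have hsfl : sfun α n = ⌊x⌋₊ := by
    rw [hxdef, hLdef, hN]; simp only [sfun]
  have hs_ub : sR ≤ x := by
    rw [hsRdef, hsfl]; exact Nat.floor_le hxpos.le
  have hs_lb : x / 2 ≤ sR := by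
    have h1 := Nat.sub_one_lt_floor x
    rw [← hsfl, ← hsRdef] at h1
    linarith only [h1, hx2]
  have hsR0 : (0:ℝ) < sR := by linarith only [hs_lb, hx2]
  have hs_pos : 0 < sfun α n := by
    rw [hsRdef] at hsR0; exact_mod_cast hsR0
  -- s ≤ N^{1/2}
  have hx_ub : x ≤ N ^ ((1:ℝ)/2) := by
    have h1 : x ≤ N ^ (1/α) := by
      apply Real.rpow_le_rpow hNL2pos.le _ hα1.le
      apply div_le_self hN0.le
      nlinarith only [hL20]
    have h2 : N ^ (1/α) ≤ N ^ ((1:ℝ)/2) := by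
      apply Real.rpow_le_rpow_of_exponent_le hN1
      rw [div_le_div_iff₀ hα0 (by norm_num)]
      linarith only [hα]
    linarith only [h1, h2]
  have hs_sqrt : sR ≤ N ^ ((1:ℝ)/2) := le_trans hs_ub hx_ub
  have hNhalf : N ^ ((1:ℝ)/2) * N ^ ((1:ℝ)/2) = N := by
    rw [← Real.rpow_add hN0]; norm_num
  have h8s : 8 * sR ≤ N := by
    calc 8 * sR ≤ 8 * N ^ ((1:ℝ)/2) := by linarith only [hs_sqrt]
      _ ≤ N ^ ((1:ℝ)/2) * N ^ ((1:ℝ)/2) := by nlinarith only [hn8, Real.rpow_nonneg hN0.le ((1:ℝ)/2)]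
      _ = N := hNhalf
  -- goal 1
  have goal1 : sR < (N / L) ^ (1 / α) := by
    have h1 : N / L ^ 2 < N / L := by
      apply div_lt_div_of_pos_left hN0 hL0
      nlinarith only [hL20]
    have h2 : x < (N / L) ^ (1/α) := Real.rpow_lt_rpow hNL2pos.le h1 hα1
    linarith only [h2, hs_ub]
  -- h bounds
  set hR : ℝ := (hfun α n : ℝ) with hhRdef
  have hhfl : hfun α n = n / (2 * sfun α n) := rfl
  have hhR_lb : N < (hR + 1) * (2 * sR) := by
    have h2s : 0 < 2 * sfun α n := by omega
    have h1 : n < (n / (2 * sfun α n) + 1) * (2 * sfun α n) := by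
      have hd := Nat.div_add_mod n (2 * sfun α n)
      have hm : n % (2 * sfun α n) < 2 * sfun α n := Nat.mod_lt _ h2s
      have e2 : (n / (2 * sfun α n) + 1) * (2 * sfun α n)
          = 2 * sfun α n * (n / (2 * sfun α n)) + 2 * sfun α n := by ring
      omega
    rw [← hhfl] at h1
    have h2 := (Nat.cast_lt (α := ℝ)).mpr h1
    push_cast at h2
    rw [hhRdef, hsRdef, hN]
    push_cast
    linarith only [h2]
  set q : ℝ := N / (4 * sR) with hqdef
  have hq2 : 2 ≤ q := by
    rw [hqdef, le_div_iff₀ (by positivity)]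
    linarith only [h8s]
  have hq_hR : q ≤ hR := by
    have e : N / (2 * sR) = 2 * q := by
      rw [hqdef]; field_simp; ring
    have h1 : N / (2 * sR) < hR + 1 := by
      rw [div_lt_iff₀ (by positivity)]
      linarith only [hhR_lb]
    rw [e] at h1
    linarith only [h1, hq2]
  have goal2 : 2 ≤ hfun α n := by
    have h1 : (2:ℝ) ≤ hR := by linarith only [hq2, hq_hR]
    rw [hhRdef] at h1
    exact_mod_cast h1
  -- half bound
  set fR : ℝ := ((hfun α n / 2 : ℕ) : ℝ) with hfRdef
  have hfR_lb : hR / 4 ≤ fR := by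
    have h1 : hfun α n ≤ 4 * (hfun α n / 2) := by omega
    have := (Nat.cast_le (α := ℝ)).mpr h1
    push_cast at this
    rw [hfRdef, hhRdef]
    push_cast
    linarith only [this]
  have hfR_pos : (0:ℝ) < fR := by
    have h1 : (0:ℝ) < hR := by linarith only [hq2, hq_hR]
    linarith only [h1, hfR_lb]
  have hq16 : N / (16 * sR) ≤ fR := by
    have e : N / (16 * sR) = q / 4 := by rw [hqdef]; ring
    rw [e]; linarith only [hq_hR, hfR_lb]
  -- t bound
  set t : ℕ := Nat.log 2 (hfun α n / 2) with htdef
  have hf2pos : 0 < hfun α n / 2 := by omega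
  have ht_pow : hfun α n / 2 < 2 ^ (t + 1) := by
    rw [htdef]; exact Nat.lt_pow_succ_log_self one_lt_two _
  have ht_cast : fR < (2:ℝ) ^ ((t:ℝ) + 1) := by
    have h2 := (Nat.cast_lt (α := ℝ)).mpr ht_pow
    rw [show ((t:ℝ) + 1) = ((t + 1 : ℕ) : ℝ) by push_cast; ring, Real.rpow_natCast]
    rw [hfRdef]
    exact_mod_cast h2
  have hlogb_f : Real.logb 2 fR < (t:ℝ) + 1 := by
    have h1 : Real.logb 2 fR < Real.logb 2 ((2:ℝ) ^ ((t:ℝ) + 1)) :=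
      Real.logb_lt_logb one_lt_two hfR_pos ht_cast
    rwa [Real.logb_rpow (by norm_num) (by norm_num)] at h1
  have hsixteen : Real.logb 2 (16:ℝ) = 4 := by
    rw [show (16:ℝ) = 2 ^ (4:ℕ) by norm_num, Real.logb_pow,
      Real.logb_self_eq_one (by norm_num)]
    norm_num
  have hfR_big : N ^ ((1:ℝ)/2) / 16 ≤ fR := by
    have h1 : N / (16 * N ^ ((1:ℝ)/2)) ≤ N / (16 * sR) :=
      div_le_div_of_nonneg_left hN0.le (by positivity)
        (by linarith only [hs_sqrt] : 16 * sR ≤ 16 * N ^ ((1:ℝ)/2))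
    have e : N / (16 * N ^ ((1:ℝ)/2)) = N ^ ((1:ℝ)/2) / 16 := by
      rw [div_eq_div_iff (by positivity) (by norm_num)]
      nlinarith only [hNhalf]
    rw [e] at h1
    linarith only [h1, hq16]
  have hlog_lb : L / 2 - 4 ≤ Real.logb 2 fR := by
    have hpos16 : (0:ℝ) < N ^ ((1:ℝ)/2) / 16 := by positivity
    have h1 : Real.logb 2 (N ^ ((1:ℝ)/2) / 16) ≤ Real.logb 2 fR :=
      (Real.logb_le_logb one_lt_two hpos16 hfR_pos).mpr hfR_big
    have h2 : Real.logb 2 (N ^ ((1:ℝ)/2) / 16) = L / 2 - 4 := by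
      rw [Real.logb_div (Real.rpow_pos_of_pos hN0 _).ne' (by norm_num : (16:ℝ) ≠ 0),
        Real.logb_rpow_eq_mul_logb_of_pos hN0, hsixteen, ← hLdef]
      ring
    linarith only [h1, h2]
  have ht_lb : L / 4 ≤ (t:ℝ) := by linarith only [hlog_lb, hlogb_f, hL20]
  have htR0 : (0:ℝ) ≤ (t:ℝ) := Nat.cast_nonneg _
  have key1 : L / 4 * (N / (16 * sR)) * (sR * sR) ≤ (t:ℝ) * fR * (sR * sR) := by
    apply mul_le_mul_of_nonneg_right _ (by positivity)
    exact mul_le_mul ht_lb hq16 (by positivity) htR0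
  have key2 : L / 4 * (N / (16 * sR)) * (sR * sR) = L * N * sR / 64 := by
    field_simp
    ring
  have key3 : L * N * (x / 2) / 64 ≤ L * N * sR / 64 := by
    have h1 : L * N * (x / 2) ≤ L * N * sR :=
      mul_le_mul_of_nonneg_left hs_lb (by positivity)
    linarith only [h1]
  have e3 : x = N ^ (1/α) / L ^ ((2:ℝ)/α) := by
    rw [hxdef, Real.div_rpow hN0.le (by positivity)]
    congr 1
    rw [← Real.rpow_natCast L 2, ← Real.rpow_mul hL0.le]
    norm_num
    rw [div_eq_mul_inv]
  have e4 : L * x = L ^ (1 - 2/α) * N ^ (1/α) := by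
    have hL2a : (0:ℝ) < L ^ ((2:ℝ)/α) := Real.rpow_pos_of_pos hL0 _
    rw [e3, Real.rpow_sub hL0, Real.rpow_one]
    field_simp
  have key6 : 512 * N ^ (1/α) ≤ L * x := by
    rw [e4]
    have h1 := mul_le_mul_of_nonneg_right hL512 (Real.rpow_nonneg hN0.le (1/α))
    linarith only [h1]
  have hm_ub : (mfun α n : ℝ) ≤ N ^ (1/α) := by
    have hmfl : mfun α n = ⌊N ^ (1/α)⌋₊ := by rw [hN]; simp only [mfun]
    rw [hmfl]
    exact Nat.floor_le (Real.rpow_nonneg hN0.le _)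
  have hNp : (0:ℝ) < N ^ (1/α) := Real.rpow_pos_of_pos hN0 _
  have final : ((mfun α n : ℝ) + 1) * N < (t:ℝ) * fR * (sR * sR) := by
    have c1 : ((mfun α n : ℝ) + 1) * N ≤ (N ^ (1/α) + 1) * N :=
      mul_le_mul_of_nonneg_right (by linarith only [hm_ub]) hN0.le
    have c2 : (N ^ (1/α) + 1) * N < 4 * (N ^ (1/α) * N) := by
      nlinarith only [hn2, hN0, hNp]
    have c4 : (512 * N ^ (1/α)) * N / 128 ≤ (L * x) * N / 128 := by
      have h1 := mul_le_mul_of_nonneg_right key6 hN0.le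
      linarith only [h1]
    calc ((mfun α n : ℝ) + 1) * N ≤ (N ^ (1/α) + 1) * N := c1
      _ < 4 * (N ^ (1/α) * N) := c2
      _ = (512 * N ^ (1/α)) * N / 128 := by ring
      _ ≤ (L * x) * N / 128 := c4
      _ = L * N * (x / 2) / 64 := by ring
      _ ≤ L * N * sR / 64 := key3
      _ = L / 4 * (N / (16 * sR)) * (sR * sR) := key2.symm
      _ ≤ (t:ℝ) * fR * (sR * sR) := key1
  refine ⟨goal1, goal2, ?_⟩
  rw [← Nat.cast_lt (α := ℝ)]
  push_cast
  rw [← hN, ← hsRdef, ← hfRdef]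
  linarith only [final]

end Aux

theorem stmt8 (α C C' : ℝ) (hα : 2 < α) (hC : 0 < C) (hCz : C ≤ 1 / zetaR α)
    (hC' : (C / (α - 1) + (C / 2) ^ (1 / α) + 6) ^ α + C / (α - 1) ≤ C') :
    ∃ d : ℝ, 0 < d ∧ ∃ N : ℕ, ∀ n : ℕ, N ≤ n →
      ¬ ∃ D : List Bool → List Bool → Bool,
        ∀ G : SimpleGraph (Fin n), InPalpha α C' G →
          ∃ ℓ : Fin n → List Bool,
            (∀ v : Fin n, ((ℓ v).length : ℝ) < d * (n : ℝ) ^ (1 / α)) ∧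
            ∀ u v : Fin n, u ≠ v → (D (ℓ u) (ℓ v) = true ↔ G.Adj u v) := by
  have hC'0 : 0 ≤ C' := by
    have h1 : 0 < α - 1 := by linarith
    have h2 : 0 < C / (α - 1) := div_pos hC h1
    have h3 : 0 ≤ (C / 2) ^ (1 / α) := Real.rpow_nonneg (by linarith) _
    have hb : 0 < C / (α - 1) + (C / 2) ^ (1 / α) + 6 := by linarith
    have h4 : 0 < (C / (α - 1) + (C / 2) ^ (1 / α) + 6) ^ α :=
      Real.rpow_pos_of_pos hb α
    linarith
  refine ⟨1, one_pos, ?_⟩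
  obtain ⟨N, hN⟩ := Filter.eventually_atTop.mp (eventually_good α hα)
  refine ⟨N, fun n hn => ?_⟩
  rintro ⟨D, hD⟩
  obtain ⟨hBB, hh2, hKey⟩ := hN n hn
  set s := sfun α n with hs
  set h := hfun α n with hh
  set m := mfun α n with hm
  have hsh : 2 * s * h ≤ n := by
    calc 2 * s * h = h * (2 * s) := by ring
      _ ≤ n := by rw [hh, hfun]; exact Nat.div_mul_le_self n (2 * s)
  -- every graph in the family is in the power-law class
  have hin : ∀ π : Fin s → Fin s → Equiv.Perm (Fin h), InPalpha α C' (Gr hsh π) := by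
    intro π k hk1 hk2
    have hempty : {v : Fin n | k ≤ deg (Gr hsh π) v} = ∅ := by
      ext v
      simp only [Set.mem_setOf_eq, Set.mem_empty_iff_false, iff_false, not_le]
      have h1 : deg (Gr hsh π) v ≤ s := neighborSet_Gr_le hsh π v
      have h2 : (s : ℝ) < (k : ℝ) := lt_of_lt_of_le hBB hk1
      have h3 : s < k := by exact_mod_cast h2
      omega
    rw [hempty]
    simp only [Set.ncard_empty, Nat.cast_zero]
    exact div_nonneg (mul_nonneg hC'0 (Nat.cast_nonneg n))
      (Real.rpow_nonneg (Nat.cast_nonneg k) _)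
  choose ℓ hlen hadj using fun π => hD (Gr hsh π) (hin π)
  have hlenm : ∀ π v, (ℓ π v).length ≤ m := by
    intro π v
    have h1 := hlen π v
    rw [one_mul] at h1
    exact Nat.le_floor h1.le
  let F : (Fin s → Fin s → Equiv.Perm (Fin h)) → (Fin n → Fin (2 ^ (m + 1))) :=
    fun π v => ⟨lval (ℓ π v),
      lt_of_lt_of_le (lval_lt _)
        (Nat.pow_le_pow_right (by norm_num) (by have := hlenm π v; omega))⟩
  have hFinj : Function.Injective F := by
    intro π π' he
    have hl : ∀ v, ℓ π v = ℓ π' v := by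
      intro v
      have h1 : lval (ℓ π v) = lval (ℓ π' v) := congrArg Fin.val (congrFun he v)
      exact lval_inj h1
    apply Gr_injective hsh
    ext u v
    by_cases huv : u = v
    · subst huv
      simp
    · rw [← hadj π u v huv, ← hadj π' u v huv, hl u, hl v]
  have hcard := Fintype.card_le_of_injective F hFinj
  have hcard2 : (Nat.factorial h ^ (s * s)) ≤ (2 ^ (m + 1)) ^ n := by
    calc Nat.factorial h ^ (s * s) = (Nat.factorial h ^ s) ^ s := by rw [pow_mul]
      _ = Fintype.card (Fin s → Fin s → Equiv.Perm (Fin h)) := by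
          simp [Fintype.card_fun, Fintype.card_perm, Fintype.card_fin]
      _ ≤ Fintype.card (Fin n → Fin (2 ^ (m + 1))) := hcard
      _ = (2 ^ (m + 1)) ^ n := by simp [Fintype.card_fun, Fintype.card_fin]
  have hfact : 2 ^ (Nat.log 2 (h / 2) * (h / 2)) ≤ Nat.factorial h := by
    calc 2 ^ (Nat.log 2 (h / 2) * (h / 2)) = (2 ^ Nat.log 2 (h / 2)) ^ (h / 2) := by
          rw [pow_mul]
      _ ≤ (h / 2) ^ (h / 2) :=
          Nat.pow_le_pow_left (Nat.pow_log_le_self 2 (by omega)) _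
      _ ≤ Nat.factorial h := half_pow_le_factorial h
  have hbig : (2 : ℕ) ^ ((m + 1) * n) < Nat.factorial h ^ (s * s) := by
    calc (2 : ℕ) ^ ((m + 1) * n)
        < 2 ^ (Nat.log 2 (h / 2) * (h / 2) * (s * s)) := by
          exact Nat.pow_lt_pow_right one_lt_two hKey
      _ = (2 ^ (Nat.log 2 (h / 2) * (h / 2))) ^ (s * s) := by rw [pow_mul]
      _ ≤ Nat.factorial h ^ (s * s) := Nat.pow_le_pow_left hfact _
  rw [← pow_mul] at hcard2
  omega
end
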